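/- Let A, B, C, D be continuous and bounded matrix-valued functions on [0,∞) of sizes n×n, n×m, p×n, p×m respectively, with E(t) := D(t)D(t)' ≥ ε₀I for some ε₀ > 0 and all t ≥ 0. Let R = R' ≥ 0 be an n×n matrix, γ > 0, and X = X' > 0. Suppose Y : [0,∞) → ℝ^{n×n} is a differentiable symmetric-matrix-valued function satisfying α₁I ≤ Y(t) ≤ α₂I for some α₁, α₂ > 0 and solving the Riccati differential equation Ẏ = A(t)Y + YA(t)' − Y(C(t)'E(t)⁻¹C(t) − γ⁻²R)Y + B(t)B(t)', Y(0) = X⁻¹. Define the gain L(t) = Y(t)C(t)'E(t)⁻¹. Then every absolutely continuous solution z of ż = (A(t) − L(t)C(t))z + B(t)w(t) − L(t)D(t)v(t), with disturbances w, v satisfying ∫₀^∞(‖w‖² + ‖v‖²)dt < ∞, satisfies ∫₀^∞ z(t)'Rz(t) dt ≤ γ²( z(0)'X z(0) + ∫₀^∞ (‖w(t)‖² + ‖v(t)‖²) dt ). -/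

import Mathlib

/-!
With `P = Y⁻¹` the Riccati equation gives `Ṗ = -P Ẏ P`, and along the error dynamics the
storage function `V = z'Pz` satisfies, after completing squares,
`V̇ + γ⁻² z'Rz = ‖w‖² - ‖w - B'Pz‖² - (Cz + Dv)'E⁻¹(Cz + Dv) + (Dv)'E⁻¹(Dv) ≤ ‖w‖² + ‖v‖²`,
the last step because `D'E⁻¹D` is an orthogonal projection. Integrating over `[0, T]`, dropping
`V(T) ≥ 0`, using `V(0) = z(0)'Xz(0)` and letting `T → ∞` gives the bound.
-/

open Matrix MeasureTheory Set Filter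

namespace Matrix

variable {m n p : Type*} [Fintype m] [Fintype n] [Fintype p]

theorem IsSymm.dotProduct_mulVec {α : Type*} [CommSemiring α] {S : Matrix n n α}
    (hS : S.IsSymm) (x y : n → α) : x ⬝ᵥ S *ᵥ y = S *ᵥ x ⬝ᵥ y := by
  rw [Matrix.dotProduct_mulVec, ← mulVec_transpose, hS.eq]

theorem nonsing_inv_mul_mul_nonsing_inv {α : Type*} [CommRing α] [DecidableEq n]
    (A : Matrix n n α) : A⁻¹ * A * A⁻¹ = A⁻¹ := by
  rcases nonsing_inv_cancel_or_zero A with ⟨h, -⟩ | h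
  · rw [h, Matrix.one_mul]
  · rw [h, Matrix.zero_mul, Matrix.zero_mul]

omit [Fintype n] in
theorem posDef_of_posSemidef_sub_smul_one [DecidableEq n] {Y : Matrix n n ℝ} {α : ℝ}
    (hα : 0 < α) (h : (Y - α • 1).PosSemidef) : Y.PosDef := by
  simpa using (PosDef.one.smul hα).add_posSemidef h

theorem dotProduct_inv_mul_transpose_mulVec_le [DecidableEq p] (D : Matrix p m ℝ) (v : m → ℝ) :
    D *ᵥ v ⬝ᵥ (D * Dᵀ)⁻¹ *ᵥ (D *ᵥ v) ≤ v ⬝ᵥ v := by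
  -- `x = Dᵀ (D Dᵀ)⁻¹ D v` satisfies `v ⬝ x = x ⬝ x = D v ⬝ (D Dᵀ)⁻¹ D v`, and `0 ≤ ‖v - x‖²`.
  set S := (D * Dᵀ)⁻¹
  have hSs : S.IsSymm := IsSymm.inv <| by rw [IsSymm, transpose_mul, transpose_transpose]
  have hSES : S * (D * Dᵀ) * S = S := nonsing_inv_mul_mul_nonsing_inv _
  have hvx : v ⬝ᵥ Dᵀ *ᵥ (S *ᵥ (D *ᵥ v)) = D *ᵥ v ⬝ᵥ S *ᵥ (D *ᵥ v) :=
    (dotProduct_transpose_mulVec D v _).trans (dotProduct_comm _ _)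
  clear_value S
  generalize D *ᵥ v = u at hvx ⊢
  have hxx : Dᵀ *ᵥ (S *ᵥ u) ⬝ᵥ Dᵀ *ᵥ (S *ᵥ u) = u ⬝ᵥ S *ᵥ u := calc
    _ = S *ᵥ u ⬝ᵥ (D * Dᵀ) *ᵥ (S *ᵥ u) := by
      rw [dotProduct_transpose_mulVec, mulVec_mulVec]
    _ = u ⬝ᵥ (S * (D * Dᵀ) * S) *ᵥ u := by
      simp only [← mulVec_mulVec]
      rw [dotProduct_mulVec u S, ← mulVec_transpose, hSs.eq]
    _ = u ⬝ᵥ S *ᵥ u := by rw [hSES]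
  have := dotProduct_star_self_nonneg (v - Dᵀ *ᵥ (S *ᵥ u))
  simp only [star_trivial, sub_dotProduct, dotProduct_sub, dotProduct_comm _ v] at this
  linarith

theorem nonsing_inv_mul_riccati_mul_nonsing_inv [DecidableEq n] {Y : Matrix n n ℝ}
    (hY : IsUnit Y.det) (A Q : Matrix n n ℝ) (B : Matrix n m ℝ) :
    Y⁻¹ * (A * Y + Y * Aᵀ - Y * Q * Y + B * Bᵀ) * Y⁻¹
      = Y⁻¹ * A + Aᵀ * Y⁻¹ - Q + Y⁻¹ * B * (Bᵀ * Y⁻¹) := by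
  simp only [Matrix.mul_add, Matrix.add_mul, Matrix.mul_sub, Matrix.sub_mul, Matrix.mul_assoc,
    nonsing_inv_mul_cancel_left Y _ hY, mul_nonsing_inv Y hY, Matrix.mul_one]

theorem nonsing_inv_mulVec_sub_gain [DecidableEq n] {Y : Matrix n n ℝ} (hY : IsUnit Y.det)
    (A : Matrix n n ℝ) (B : Matrix n m ℝ) (C : Matrix p n ℝ) (D : Matrix p m ℝ)
    (K : Matrix n p ℝ) (z : n → ℝ) (w v : m → ℝ) :
    Y⁻¹ *ᵥ ((A - Y * K * C) *ᵥ z + B *ᵥ w - (Y * K * D) *ᵥ v)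
      = Y⁻¹ *ᵥ (A *ᵥ z) - K *ᵥ (C *ᵥ z + D *ᵥ v) + Y⁻¹ *ᵥ (B *ᵥ w) := by
  simp only [mulVec_add, mulVec_sub, sub_mulVec, mulVec_mulVec, Matrix.mul_assoc,
    nonsing_inv_mul_cancel_left Y _ hY]
  abel

theorem riccati_filter_dissipation_le [DecidableEq n] [DecidableEq p]
    (A : Matrix n n ℝ) (B : Matrix n m ℝ) (C : Matrix p n ℝ) (D : Matrix p m ℝ)
    (R : Matrix n n ℝ) (γ : ℝ) {Y : Matrix n n ℝ} (hY : IsUnit Y.det) (hYs : Y.IsSymm)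
    {L : Matrix n p ℝ} (hL : L = Y * Cᵀ * (D * Dᵀ)⁻¹) {Y' : Matrix n n ℝ}
    (hY' : Y' = A * Y + Y * Aᵀ - Y * (Cᵀ * (D * Dᵀ)⁻¹ * C - (γ ^ 2)⁻¹ • R) * Y + B * Bᵀ)
    {z z' : n → ℝ} {w v : m → ℝ} (hz' : z' = (A - L * C) *ᵥ z + B *ᵥ w - (L * D) *ᵥ v) :
    z' ⬝ᵥ Y⁻¹ *ᵥ z + z ⬝ᵥ -(Y⁻¹ * Y' * Y⁻¹) *ᵥ z + z ⬝ᵥ Y⁻¹ *ᵥ z'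
      + (γ ^ 2)⁻¹ * (z ⬝ᵥ R *ᵥ z) ≤ w ⬝ᵥ w + v ⬝ᵥ v := by
  set S := (D * Dᵀ)⁻¹
  have hPs : Y⁻¹.IsSymm := hYs.inv
  have hS : S.PosSemidef := by
    simpa [conjTranspose_eq_transpose_of_trivial] using (posSemidef_self_mul_conjTranspose D).inv
  have hSs : S.IsSymm := by
    simpa [IsSymm, IsHermitian, conjTranspose_eq_transpose_of_trivial] using hS.isHermitian
  set q := C *ᵥ z
  set u := D *ᵥ v
  set r := Bᵀ *ᵥ (Y⁻¹ *ᵥ z)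
  set a := Y⁻¹ *ᵥ z ⬝ᵥ A *ᵥ z
  have h1 : z ⬝ᵥ Y⁻¹ *ᵥ z' = a - q ⬝ᵥ S *ᵥ (q + u) + r ⬝ᵥ w := by
    rw [hz', hL, Matrix.mul_assoc Y, nonsing_inv_mulVec_sub_gain hY, dotProduct_add,
      dotProduct_sub, hPs.dotProduct_mulVec, hPs.dotProduct_mulVec, ← mulVec_mulVec,
      dotProduct_mulVec z Cᵀ, vecMul_transpose, dotProduct_mulVec _ B, ← mulVec_transpose]
  have h2 : z' ⬝ᵥ Y⁻¹ *ᵥ z = z ⬝ᵥ Y⁻¹ *ᵥ z' := by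
    rw [hPs.dotProduct_mulVec, dotProduct_comm]
  have h3 : z ⬝ᵥ (Y⁻¹ * Y' * Y⁻¹) *ᵥ z
      = a + a - (q ⬝ᵥ S *ᵥ q - (γ ^ 2)⁻¹ * (z ⬝ᵥ R *ᵥ z)) + r ⬝ᵥ r := by
    simp only [hY', nonsing_inv_mul_riccati_mul_nonsing_inv hY, add_mulVec, sub_mulVec,
      dotProduct_add, dotProduct_sub, ← mulVec_mulVec, smul_mulVec, dotProduct_smul, smul_eq_mul]
    rw [hPs.dotProduct_mulVec z (A *ᵥ z), dotProduct_mulVec z Aᵀ, vecMul_transpose,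
      dotProduct_comm (A *ᵥ z), dotProduct_mulVec z Cᵀ, vecMul_transpose,
      hPs.dotProduct_mulVec z (B *ᵥ _), dotProduct_mulVec _ B, ← mulVec_transpose]
  have hwr : 0 ≤ (w - r) ⬝ᵥ (w - r) := by simpa using dotProduct_star_self_nonneg (w - r)
  have hqu : 0 ≤ (q + u) ⬝ᵥ S *ᵥ (q + u) := by simpa using hS.dotProduct_mulVec_nonneg (q + u)
  have huv : u ⬝ᵥ S *ᵥ u ≤ v ⬝ᵥ v := dotProduct_inv_mul_transpose_mulVec_le D v
  simp only [sub_dotProduct, dotProduct_sub, mulVec_add, dotProduct_add, add_dotProduct,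
    dotProduct_comm w r, hSs.dotProduct_mulVec u q, dotProduct_comm (S *ᵥ u) q] at hwr hqu h1
  rw [neg_mulVec, dotProduct_neg, h2, h1, h3]
  linarith

open scoped Matrix.Norms.Operator in
theorem hasDerivWithinAt_nonsing_inv_apply {𝕜 ι : Type*} [RCLike 𝕜] [Fintype ι] [DecidableEq ι]
    {Y : 𝕜 → Matrix ι ι 𝕜} {Y' : Matrix ι ι 𝕜} {s : Set 𝕜} {t : 𝕜}
    (hY : ∀ a b, HasDerivWithinAt (fun u => Y u a b) (Y' a b) s t) (ht : IsUnit (Y t).det)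
    (a b : ι) :
    HasDerivWithinAt (fun u => (Y u)⁻¹ a b) (-((Y t)⁻¹ * Y' * (Y t)⁻¹) a b) s t := by
  -- `Ring.inverse` is differentiable in the complete normed algebra of matrices (operator norm);
  -- `e` moves entrywise derivatives into and out of that normed structure.
  have : HasSummableGeomSeries (Matrix ι ι 𝕜) := by
    have := FiniteDimensional.complete 𝕜 (Matrix ι ι 𝕜)
    infer_instance
  let e : (ι → ι → 𝕜) ≃L[𝕜] Matrix ι ι 𝕜 := (Matrix.ofLinearEquiv 𝕜).toContinuousLinearEquiv
  have hYm : HasDerivWithinAt Y Y' s t :=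
    e.hasFDerivAt.comp_hasDerivWithinAt t
      (hasDerivWithinAt_pi.2 fun a => hasDerivWithinAt_pi.2 fun b => hY a b)
  obtain ⟨u, hu⟩ := (isUnit_iff_isUnit_det _).mpr ht
  have hinv := hasFDerivAt_ringInverse (𝕜 := 𝕜) u
  rw [hu] at hinv
  have hYinv := e.symm.hasFDerivAt.comp_hasDerivWithinAt t (hinv.comp_hasDerivWithinAt t hYm)
  simp only [nonsing_inv_eq_ringInverse, ← hu, Ring.inverse_unit] at hYinv ⊢
  exact hasDerivWithinAt_pi.1 (hasDerivWithinAt_pi.1 hYinv a) b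

end Matrix

section

variable {𝕜 m n : Type*} [NontriviallyNormedField 𝕜] [Fintype n]
  {s : Set 𝕜} {t : 𝕜}

theorem HasDerivWithinAt.dotProduct {x y : 𝕜 → n → 𝕜} {x' y' : n → 𝕜}
    (hx : HasDerivWithinAt x x' s t) (hy : HasDerivWithinAt y y' s t) :
    HasDerivWithinAt (fun u => x u ⬝ᵥ y u) (x' ⬝ᵥ y t + x t ⬝ᵥ y') s t := by
  simp only [_root_.dotProduct]
  rw [← Finset.sum_add_distrib]
  exact HasDerivWithinAt.fun_sum fun i _ =>
    (hasDerivWithinAt_pi.1 hx i).mul (hasDerivWithinAt_pi.1 hy i)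

theorem HasDerivWithinAt.mulVec {M : 𝕜 → Matrix m n 𝕜} {M' : Matrix m n 𝕜} {x : 𝕜 → n → 𝕜}
    {x' : n → 𝕜} (hM : ∀ i j, HasDerivWithinAt (fun u => M u i j) (M' i j) s t)
    (hx : HasDerivWithinAt x x' s t) :
    HasDerivWithinAt (fun u => M u *ᵥ x u) (M' *ᵥ x t + M t *ᵥ x') s t :=
  hasDerivWithinAt_pi.2 fun i => (hasDerivWithinAt_pi.2 (hM i)).dotProduct hx

theorem HasDerivWithinAt.dotProduct_mulVec {P : 𝕜 → Matrix n n 𝕜} {P' : Matrix n n 𝕜}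
    {x : 𝕜 → n → 𝕜} {x' : n → 𝕜}
    (hP : ∀ i j, HasDerivWithinAt (fun u => P u i j) (P' i j) s t)
    (hx : HasDerivWithinAt x x' s t) :
    HasDerivWithinAt (fun u => x u ⬝ᵥ P u *ᵥ x u)
      (x' ⬝ᵥ P t *ᵥ x t + x t ⬝ᵥ P' *ᵥ x t + x t ⬝ᵥ P t *ᵥ x') s t := by
  simpa only [dotProduct_add, add_assoc] using hx.dotProduct (hx.mulVec hP)

end

theorem lintegral_Ioi_le_of_hasDerivWithinAt_add_le {V V' f g : ℝ → ℝ}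
    (hV : ∀ t ∈ Ici (0 : ℝ), HasDerivWithinAt V (V' t) (Ici 0) t)
    (hV0 : ∀ t ∈ Ici (0 : ℝ), 0 ≤ V t) (hf : ContinuousOn f (Ici 0)) (hf0 : ∀ t, 0 ≤ f t)
    (hg : IntegrableOn g (Ioi 0)) (hg0 : ∀ t, 0 ≤ g t)
    (hVfg : ∀ t ∈ Ici (0 : ℝ), V' t + f t ≤ g t) :
    ∫⁻ t in Ioi 0, ENNReal.ofReal (f t)
      ≤ ENNReal.ofReal (V 0) + ∫⁻ t in Ioi 0, ENNReal.ofReal (g t) := by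
  have hfin : ∀ T : ℝ, 0 ≤ T → ∫ t in Ioc 0 T, f t ≤ V 0 + ∫ t in Ioc 0 T, g t := by
    intro T hT
    have hf' : IntegrableOn f (Icc 0 T) := (hf.mono Icc_subset_Ici_self).integrableOn_Icc
    have hg' : IntegrableOn g (Icc 0 T) := by
      rw [integrableOn_Icc_iff_integrableOn_Ioc]
      exact hg.mono_set Ioc_subset_Ioi_self
    have hFTC :=
      intervalIntegral.sub_le_integral_of_hasDeriv_right_of_le (φ := fun t => g t - f t) hT
      (fun t ht => (hV t ht.1).continuousWithinAt.mono Icc_subset_Ici_self)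
      (fun t ht => (hV t ht.1.le).mono fun s hs => ht.1.le.trans (le_of_lt hs))
      (hg'.sub hf') fun t ht => by linarith [hVfg t ht.1.le]
    rw [intervalIntegral.integral_of_le hT,
      integral_sub (hg'.mono_set Ioc_subset_Icc_self) (hf'.mono_set Ioc_subset_Icc_self)] at hFTC
    linarith [hV0 T hT]
  conv_lhs => rw [← iUnion_Ioc_eq_Ioi_self_iff.2 fun x _ => exists_nat_ge x,
    setLIntegral_iUnion_of_directed _ (Monotone.directed_le fun i j hij =>
      Ioc_subset_Ioc_right (Nat.cast_le.2 hij))]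
  refine iSup_le fun k => ?_
  have hk : IntegrableOn f (Ioc 0 (k : ℝ)) :=
    ((hf.mono Icc_subset_Ici_self).integrableOn_Icc).mono_set Ioc_subset_Icc_self
  calc ∫⁻ t in Ioc 0 (k : ℝ), ENNReal.ofReal (f t)
      = ENNReal.ofReal (∫ t in Ioc 0 (k : ℝ), f t) :=
        (ofReal_integral_eq_lintegral_ofReal hk (ae_of_all _ hf0)).symm
    _ ≤ ENNReal.ofReal (V 0 + ∫ t in Ioi 0, g t) :=
        ENNReal.ofReal_le_ofReal <| (hfin k k.cast_nonneg).trans <| add_le_add_right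
          (setIntegral_mono_set hg (ae_of_all _ hg0) Ioc_subset_Ioi_self.eventuallyLE) _
    _ = ENNReal.ofReal (V 0) + ∫⁻ t in Ioi 0, ENNReal.ofReal (g t) := by
        rw [ENNReal.ofReal_add (hV0 0 self_mem_Ici) (setIntegral_nonneg measurableSet_Ioi
          fun t _ => hg0 t), ofReal_integral_eq_lintegral_ofReal hg (ae_of_all _ hg0)]

theorem single_node_Hinf_bound_general
    {n m p : ℕ}
    (A : ℝ → Matrix (Fin n) (Fin n) ℝ) (B : ℝ → Matrix (Fin n) (Fin m) ℝ)
    (C : ℝ → Matrix (Fin p) (Fin n) ℝ) (D : ℝ → Matrix (Fin p) (Fin m) ℝ)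
    (R : Matrix (Fin n) (Fin n) ℝ) (hR : R.PosSemidef)
    (γ : ℝ) (hγ : 0 < γ)
    (X : Matrix (Fin n) (Fin n) ℝ) (hX : X.PosDef)
    (Y : ℝ → Matrix (Fin n) (Fin n) ℝ)
    (hYsymm : ∀ t ∈ Ici (0:ℝ), (Y t).IsSymm)
    (α₁ : ℝ) (hα₁ : 0 < α₁)
    (hYlb : ∀ t ∈ Ici (0:ℝ),
      (Y t - α₁ • (1 : Matrix (Fin n) (Fin n) ℝ)).PosSemidef)
    (hY0 : Y 0 = X⁻¹)
    (hRiccati : ∀ t ∈ Ici (0:ℝ), ∀ a b,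
      HasDerivWithinAt (fun s => Y s a b)
        ((A t * Y t + Y t * (A t)ᵀ
          - Y t * ((C t)ᵀ * (D t * (D t)ᵀ)⁻¹ * C t - (γ ^ 2)⁻¹ • R) * Y t
          + B t * (B t)ᵀ) a b) (Ici 0) t)
    (w v : ℝ → Fin m → ℝ)
    (hwmeas : Measurable w) (hvmeas : Measurable v)
    (hL2 : ∫⁻ t in Ioi (0:ℝ),
      ENNReal.ofReal (∑ a, (w t a) ^ 2 + ∑ a, (v t a) ^ 2) < ⊤)
    (z : ℝ → Fin n → ℝ)
    (hz : ∀ t ∈ Ici (0:ℝ),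
      HasDerivWithinAt z
        ((A t - (Y t * (C t)ᵀ * (D t * (D t)ᵀ)⁻¹) * C t).mulVec (z t)
          + (B t).mulVec (w t)
          - ((Y t * (C t)ᵀ * (D t * (D t)ᵀ)⁻¹) * D t).mulVec (v t))
        (Ici 0) t) :
    ∫⁻ t in Ioi (0:ℝ), ENNReal.ofReal (z t ⬝ᵥ R.mulVec (z t))
      ≤ ENNReal.ofReal (γ ^ 2) *
        (ENNReal.ofReal (z 0 ⬝ᵥ X.mulVec (z 0))
          + ∫⁻ t in Ioi (0:ℝ),
              ENNReal.ofReal (∑ a, (w t a) ^ 2 + ∑ a, (v t a) ^ 2)) := by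
  have hYpd t (ht : t ∈ Ici (0:ℝ)) : (Y t).PosDef :=
    posDef_of_posSemidef_sub_smul_one hα₁ (hYlb t ht)
  have hYdet t (ht : t ∈ Ici (0:ℝ)) : IsUnit (Y t).det :=
    (isUnit_iff_isUnit_det _).1 (hYpd t ht).isUnit
  have hzc : ContinuousOn z (Ici 0) := fun t ht => (hz t ht).continuousWithinAt
  have hsq (x : Fin m → ℝ) : ∑ a, x a ^ 2 = x ⬝ᵥ x := by simp [dotProduct, sq]
  have hg0 t : 0 ≤ ∑ a, (w t a) ^ 2 + ∑ a, (v t a) ^ 2 := by positivity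
  have hg : IntegrableOn (fun t => ∑ a, (w t a) ^ 2 + ∑ a, (v t a) ^ 2) (Ioi 0) :=
    ⟨by fun_prop, (hasFiniteIntegral_iff_ofReal (ae_of_all _ hg0)).2 hL2⟩
  have key := lintegral_Ioi_le_of_hasDerivWithinAt_add_le
    (f := fun t => (γ ^ 2)⁻¹ * (z t ⬝ᵥ R *ᵥ z t))
    (fun t ht => (hz t ht).dotProduct_mulVec
      (hasDerivWithinAt_nonsing_inv_apply (hRiccati t ht) (hYdet t ht)))
    (fun t ht => by simpa using (hYpd t ht).inv.posSemidef.dotProduct_mulVec_nonneg (z t))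
    (continuousOn_const.mul ((continuous_id.dotProduct
      (continuous_const.matrix_mulVec continuous_id)).comp_continuousOn hzc))
    (fun t => mul_nonneg (by positivity) (by simpa using hR.dotProduct_mulVec_nonneg (z t)))
    hg hg0
    (fun t ht => by
      rw [hsq, hsq]
      exact riccati_filter_dissipation_le _ _ _ _ R γ (hYdet t ht) (hYsymm t ht) rfl rfl rfl)
  rw [hY0, nonsing_inv_nonsing_inv X ((isUnit_iff_isUnit_det _).1 hX.isUnit)] at key
  calc ∫⁻ t in Ioi 0, ENNReal.ofReal (z t ⬝ᵥ R *ᵥ z t)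
      = ENNReal.ofReal (γ ^ 2) * ∫⁻ t in Ioi 0, ENNReal.ofReal ((γ ^ 2)⁻¹ * (z t ⬝ᵥ R *ᵥ z t)) := by
        rw [← lintegral_const_mul' _ _ ENNReal.ofReal_ne_top]
        simp_rw [← ENNReal.ofReal_mul (sq_nonneg γ),
          mul_inv_cancel_left₀ (pow_ne_zero 2 hγ.ne')]
    _ ≤ _ := by gcongr

/-- single-node H∞ disturbance attenuation bound for the filtering
error dynamics `ż = (A − LC)z + Bw − LDv` with gain `L = YC'E⁻¹` obtained from a
bounded uniformly positive definite solution `Y` of the game-type Riccati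
differential equation. -/
theorem single_node_Hinf_bound
    {n m p : ℕ}
    (A : ℝ → Matrix (Fin n) (Fin n) ℝ) (B : ℝ → Matrix (Fin n) (Fin m) ℝ)
    (C : ℝ → Matrix (Fin p) (Fin n) ℝ) (D : ℝ → Matrix (Fin p) (Fin m) ℝ)
    (hAc : Continuous A) (hBc : Continuous B) (hCc : Continuous C)
    (hDc : Continuous D)
    (hAb : ∃ M, ∀ t ∈ Ici (0:ℝ), ∀ a b, |A t a b| ≤ M)
    (hBb : ∃ M, ∀ t ∈ Ici (0:ℝ), ∀ a b, |B t a b| ≤ M)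
    (hCb : ∃ M, ∀ t ∈ Ici (0:ℝ), ∀ a b, |C t a b| ≤ M)
    (hDb : ∃ M, ∀ t ∈ Ici (0:ℝ), ∀ a b, |D t a b| ≤ M)
    (ε₀ : ℝ) (hε₀ : 0 < ε₀)
    (hE : ∀ t ∈ Ici (0:ℝ), (D t * (D t)ᵀ - ε₀ • (1 : Matrix (Fin p) (Fin p) ℝ)).PosSemidef)
    (R : Matrix (Fin n) (Fin n) ℝ) (hR : R.PosSemidef)
    (γ : ℝ) (hγ : 0 < γ)
    (X : Matrix (Fin n) (Fin n) ℝ) (hX : X.PosDef)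
    (Y : ℝ → Matrix (Fin n) (Fin n) ℝ)
    (hYsymm : ∀ t ∈ Ici (0:ℝ), (Y t).IsSymm)
    (α₁ α₂ : ℝ) (hα₁ : 0 < α₁) (hα₂ : 0 < α₂)
    (hYlb : ∀ t ∈ Ici (0:ℝ),
      (Y t - α₁ • (1 : Matrix (Fin n) (Fin n) ℝ)).PosSemidef)
    (hYub : ∀ t ∈ Ici (0:ℝ),
      (α₂ • (1 : Matrix (Fin n) (Fin n) ℝ) - Y t).PosSemidef)
    (hY0 : Y 0 = X⁻¹)
    (hRiccati : ∀ t ∈ Ici (0:ℝ), ∀ a b,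
      HasDerivWithinAt (fun s => Y s a b)
        ((A t * Y t + Y t * (A t)ᵀ
          - Y t * ((C t)ᵀ * (D t * (D t)ᵀ)⁻¹ * C t - (γ ^ 2)⁻¹ • R) * Y t
          + B t * (B t)ᵀ) a b) (Ici 0) t)
    (w v : ℝ → Fin m → ℝ)
    (hwmeas : Measurable w) (hvmeas : Measurable v)
    (hL2 : ∫⁻ t in Ioi (0:ℝ),
      ENNReal.ofReal (∑ a, (w t a) ^ 2 + ∑ a, (v t a) ^ 2) < ⊤)
    (z : ℝ → Fin n → ℝ)
    (hz : ∀ t ∈ Ici (0:ℝ),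
      HasDerivWithinAt z
        ((A t - (Y t * (C t)ᵀ * (D t * (D t)ᵀ)⁻¹) * C t).mulVec (z t)
          + (B t).mulVec (w t)
          - ((Y t * (C t)ᵀ * (D t * (D t)ᵀ)⁻¹) * D t).mulVec (v t))
        (Ici 0) t) :
    ∫⁻ t in Ioi (0:ℝ), ENNReal.ofReal (z t ⬝ᵥ R.mulVec (z t))
      ≤ ENNReal.ofReal (γ ^ 2) *
        (ENNReal.ofReal (z 0 ⬝ᵥ X.mulVec (z 0))
          + ∫⁻ t in Ioi (0:ℝ),
              ENNReal.ofReal (∑ a, (w t a) ^ 2 + ∑ a, (v t a) ^ 2)) :=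
  single_node_Hinf_bound_general A B C D R hR γ hγ X hX Y hYsymm α₁ hα₁ hYlb hY0 hRiccati w v hwmeas
    hvmeas hL2 z hz
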